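/- For every s > 0, every function f ∈ L²([0,1]^d) belonging to the Besov space B^s_{2∞} also belongs to B^{ds/(2s+d)}_{2∞} ∩ W_G(2d/(2s+d)). -/

import Mathlib

open MeasureTheory ProbabilityTheory Real Set
open scoped ENNReal NNReal

noncomputable section

attribute [local instance] Classical.propDecidable

namespace CopulaEstimation

/-- The unit cube `[0,1]^d`. -/
def box (d : ℕ) : Set (Fin d → ℝ) := Set.univ.pi fun _ => Set.Icc (0 : ℝ) 1

/-- Rescaled and translated univariate function `h_{j,k}(x) = 2^{j/2} h(2^j x - k)`. -/
def wsc (h : ℝ → ℝ) (j : ℕ) (k : ℤ) (x : ℝ) : ℝ :=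
  (2 : ℝ) ^ ((j : ℝ) / 2) * h ((2 : ℝ) ^ (j : ℕ) * x - (k : ℝ))

/-- The index set `S_d = {0,1}^d \ {(0,…,0)}`. -/
def Sd (d : ℕ) : Type := {ε : Fin d → Bool // ε ≠ fun _ => false}

instance (d : ℕ) : Fintype (Sd d) := by unfold Sd; infer_instance

/-- Tensorized scaling function `φ_{j,k}`. -/
def tensS (φ : ℝ → ℝ) {d : ℕ} (j : ℕ) (k : Fin d → ℤ) (x : Fin d → ℝ) : ℝ :=
  ∏ m, wsc φ j (k m) (x m)

/-- Tensorized wavelet `ψ^ε_{j,k}`. -/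
def tensW (φ ψ : ℝ → ℝ) {d : ℕ} (j : ℕ) (ε : Fin d → Bool) (k : Fin d → ℤ)
    (x : Fin d → ℝ) : ℝ :=
  ∏ m, if ε m then wsc ψ j (k m) (x m) else wsc φ j (k m) (x m)

/-- Scaling coefficient `f_{j,k}` of a function supported on the unit cube. -/
def coefS (φ : ℝ → ℝ) {d : ℕ} (f : (Fin d → ℝ) → ℝ) (j : ℕ) (k : Fin d → ℤ) : ℝ :=
  ∫ x in box d, f x * tensS φ j k x

/-- Wavelet coefficient `f^ε_{j,k}` of a function supported on the unit cube. -/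
def coefW (φ ψ : ℝ → ℝ) {d : ℕ} (f : (Fin d → ℝ) → ℝ) (j : ℕ) (k : Fin d → ℤ)
    (ε : Fin d → Bool) : ℝ :=
  ∫ x in box d, f x * tensW φ ψ j ε k x

/-- The hypotheses on the pair `(φ, ψ)`: continuously differentiable, supported on `[0, L]`,
and generating, at every coarse level `j₀`, an orthonormal basis of `L²(ℝ^d)`
(orthonormality together with the Parseval identity). -/
def IsWaveletBasis (d : ℕ) (L : ℝ) (φ ψ : ℝ → ℝ) : Prop :=
  ContDiff ℝ 1 φ ∧ ContDiff ℝ 1 ψ ∧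
  (∀ x, x ∉ Set.Icc (0 : ℝ) L → φ x = 0) ∧
  (∀ x, x ∉ Set.Icc (0 : ℝ) L → ψ x = 0) ∧
  (∀ (j j' : ℕ) (k k' : Fin d → ℤ) (ε ε' : Sd d),
    ∫ x : Fin d → ℝ, tensW φ ψ j ε.1 k x * tensW φ ψ j' ε'.1 k' x
      = if j = j' ∧ k = k' ∧ ε = ε' then 1 else 0) ∧
  (∀ (j : ℕ) (k k' : Fin d → ℤ),
    ∫ x : Fin d → ℝ, tensS φ j k x * tensS φ j k' x = if k = k' then 1 else 0) ∧
  (∀ (j₀ j : ℕ), j₀ ≤ j → ∀ (k k' : Fin d → ℤ) (ε : Sd d),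
    ∫ x : Fin d → ℝ, tensS φ j₀ k x * tensW φ ψ j ε.1 k' x = 0) ∧
  (∀ (j₀ : ℕ) (f : (Fin d → ℝ) → ℝ), MemLp f 2 volume →
    ∫ x, (f x) ^ 2
      = (∑' k : Fin d → ℤ, (∫ x, f x * tensS φ j₀ k x) ^ 2)
        + ∑' (j : {j : ℕ // j₀ ≤ j}) (k : Fin d → ℤ) (ε : Sd d),
            (∫ x, f x * tensW φ ψ j.1 ε.1 k x) ^ 2)

/-- Membership in the Besov space `B^s_{2∞}` of `L²([0,1]^d)`, in terms of wavelet
coefficients. -/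
def MemBesov (φ ψ : ℝ → ℝ) {d : ℕ} (s : ℝ) (f : (Fin d → ℝ) → ℝ) : Prop :=
  (⨆ J : ℕ, ENNReal.ofReal ((2 : ℝ) ^ (2 * (J : ℝ) * s)) *
      ∑' (j : {j : ℕ // J < j}) (k : Fin d → ℤ) (ε : Sd d),
        ENNReal.ofReal ((coefW φ ψ f j.1 k ε.1) ^ 2)) < ⊤

/-- Membership in the local weak Besov space `W_L(r)`. -/
def MemWeakL (φ ψ : ℝ → ℝ) {d : ℕ} (r : ℝ) (f : (Fin d → ℝ) → ℝ) : Prop :=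
  (⨆ lam ∈ Set.Ioc (0 : ℝ) 1, ENNReal.ofReal (lam ^ (r - 2)) *
      ∑' (j : ℕ) (k : Fin d → ℤ) (ε : Sd d),
        (if |coefW φ ψ f j k ε.1| ≤ lam
          then ENNReal.ofReal ((coefW φ ψ f j k ε.1) ^ 2) else 0)) < ⊤

/-- Membership in the global weak Besov space `W_G(r)`. -/
def MemWeakG (φ ψ : ℝ → ℝ) {d : ℕ} (r : ℝ) (f : (Fin d → ℝ) → ℝ) : Prop :=
  (⨆ lam ∈ Set.Ioc (0 : ℝ) 1, ENNReal.ofReal (lam ^ (r - 2)) *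
      ∑' (j : ℕ) (k : Fin d → ℤ) (ε : Sd d),
        (if (∑' k' : Fin d → ℤ, (coefW φ ψ f j k' ε.1) ^ 2) ≤ (2 : ℝ) ^ (d * j) * lam ^ 2
          then ENNReal.ofReal ((coefW φ ψ f j k ε.1) ^ 2) else 0)) < ⊤

/-- Essential boundedness of `f` on `[0,1]^d`. -/
def MemLinf {d : ℕ} (f : (Fin d → ℝ) → ℝ) : Prop :=
  ∃ M : ℝ, ∀ᵐ x ∂(volume.restrict (box d)), |f x| ≤ M

end CopulaEstimation

/-!
Both inclusions compare a dyadic level cut with the Besov tail bound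
`Σ_{j > J} ‖f_j‖² ≤ C 2^{-2Js}`. For `B^{ds/(2s+d)}_{2∞}` this is monotonicity in the smoothness
index. For `W_G(r)`, `r = 2d/(2s+d)`, fix `λ ∈ (0,1]` and the level `J` with `2^J ≈ λ^{-2/(2s+d)}`.
At a level `j ≤ J` the thresholded energy is at most `#S_d · 2^{dj} λ²` by the threshold itself, and
these sum to `O(2^{dJ} λ²)`; the levels `j > J` are bounded by the Besov tail. With this choice of
`J` both contributions times `λ^{r-2}` are bounded independently of `λ`.
-/

lemma ENNReal.tsum_ite_tsum_le_ofReal {ι : Type*} {a : ι → ℝ} (ha0 : ∀ i, 0 ≤ a i)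
    (ha : Summable a) (B : ℝ) :
    ∑' i, (if ∑' i, a i ≤ B then ENNReal.ofReal (a i) else 0) ≤ ENNReal.ofReal B := by
  split_ifs with h
  · rw [← ENNReal.ofReal_tsum_of_nonneg ha0 ha]
    exact ENNReal.ofReal_le_ofReal h
  · simp

lemma ENNReal.tsum_nat_eq_sum_range_add_tsum_gt (g : ℕ → ℝ≥0∞) (J : ℕ) :
    ∑' j, g j = ∑ j ∈ Finset.range (J + 1), g j + ∑' j : {j : ℕ // J < j}, g j := by
  rw [← ENNReal.sum_add_tsum_compl (Finset.range (J + 1))]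
  congr 1
  exact (Equiv.subtypeEquivRight fun j => by simp).tsum_eq fun j : {j : ℕ // J < j} => g j

lemma sum_range_two_pow_mul_le {d : ℕ} (hd : 1 ≤ d) (n : ℕ) :
    ∑ j ∈ Finset.range n, (2 : ℝ) ^ (d * j) ≤ 2 ^ (d * n) := by
  have := Nat.geomSum_lt (s := Finset.range n) (Nat.le_self_pow (by omega : d ≠ 0) 2)
    fun k hk => Finset.mem_range.1 hk
  simp only [← pow_mul] at this
  exact_mod_cast this.le

/-- The level `J` with `2^J ≈ λ^{-2/(2s+d)}` balances the two halves of the thresholded energy. -/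
lemma exists_level_balancing (d : ℕ) {s lam : ℝ} (hs : 0 < s) (hlam0 : 0 < lam)
    (hlam1 : lam ≤ 1) :
    ∃ J : ℕ, lam ^ (2 * d / (2 * s + d) - 2) ≤ 2 ^ (2 * (J : ℝ) * s) ∧
      lam ^ (2 * d / (2 * s + d) - 2) * (2 ^ (d * (J + 1)) * lam ^ 2) ≤ 4 ^ d := by
  set t : ℝ := 2 / (2 * s + d)
  have ht : 0 < t := by positivity
  set x := lam ^ (-t)
  have hx : 1 ≤ x := Real.one_le_rpow_of_pos_of_le_one_of_nonpos hlam0 hlam1 (by linarith)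
  obtain ⟨n, hn₁, hn₂⟩ := exists_nat_pow_near hx one_lt_two
  have hr : 2 * d / (2 * s + d) - 2 = -t * (2 * s) := by
    simp only [t]; field_simp; ring
  refine ⟨n + 1, ?_, ?_⟩
  · calc lam ^ (2 * d / (2 * s + d) - 2) = x ^ (2 * s) := by rw [hr, Real.rpow_mul hlam0.le]
      _ ≤ ((2 : ℝ) ^ (n + 1)) ^ (2 * s) := by gcongr
      _ = 2 ^ (2 * ((n + 1 : ℕ) : ℝ) * s) := by
        rw [← Real.rpow_natCast, ← Real.rpow_mul zero_le_two]; ring_nf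
  · have hx_pow : lam ^ (2 * d / (2 * s + d) - 2) * lam ^ 2 * x ^ d = 1 := by
      rw [← Real.rpow_natCast x, ← Real.rpow_mul hlam0.le, ← Real.rpow_natCast lam 2,
        ← Real.rpow_add hlam0, ← Real.rpow_add hlam0]
      convert Real.rpow_zero lam using 2
      simp only [t]; push_cast; ring
    have hpow_le : (2 : ℝ) ^ (d * (n + 1 + 1)) ≤ 4 ^ d * x ^ d :=
      calc (2 : ℝ) ^ (d * (n + 1 + 1)) = (2 * 2 ^ (n + 1)) ^ d := by
            rw [← pow_succ', ← pow_mul, mul_comm]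
        _ ≤ (2 * (2 * x)) ^ d := by gcongr; rw [pow_succ']; gcongr
        _ = 4 ^ d * x ^ d := by ring
    calc lam ^ (2 * d / (2 * s + d) - 2) * (2 ^ (d * (n + 1 + 1)) * lam ^ 2)
        ≤ lam ^ (2 * d / (2 * s + d) - 2) * (4 ^ d * x ^ d * lam ^ 2) := by gcongr
      _ = 4 ^ d * (lam ^ (2 * d / (2 * s + d) - 2) * lam ^ 2 * x ^ d) := by ring
      _ = 4 ^ d := by rw [hx_pow, mul_one]

namespace CopulaEstimation

section Energy

variable {d : ℕ} (φ ψ : ℝ → ℝ) (f : (Fin d → ℝ) → ℝ)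

def levelEnergy (j : ℕ) : ℝ≥0∞ :=
  ∑' (k : Fin d → ℤ) (ε : Sd d), ENNReal.ofReal (coefW φ ψ f j k ε.1 ^ 2)

def tailEnergy (J : ℕ) : ℝ≥0∞ :=
  ∑' j : {j : ℕ // J < j}, levelEnergy φ ψ f j

def thresholdedEnergy (j : ℕ) (lam : ℝ) : ℝ≥0∞ :=
  ∑' (k : Fin d → ℤ) (ε : Sd d),
    if (∑' k' : Fin d → ℤ, coefW φ ψ f j k' ε.1 ^ 2) ≤ (2 : ℝ) ^ (d * j) * lam ^ 2
    then ENNReal.ofReal (coefW φ ψ f j k ε.1 ^ 2) else 0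

variable {φ ψ f}

lemma memBesov_iff {s : ℝ} :
    MemBesov φ ψ s f ↔ ⨆ J : ℕ, ENNReal.ofReal (2 ^ (2 * (J : ℝ) * s)) * tailEnergy φ ψ f J < ⊤ :=
  Iff.rfl

lemma memWeakG_iff {r : ℝ} :
    MemWeakG φ ψ r f ↔
      ⨆ lam ∈ Ioc (0 : ℝ) 1, ENNReal.ofReal (lam ^ (r - 2)) *
        ∑' j, thresholdedEnergy φ ψ f j lam < ⊤ :=
  Iff.rfl

lemma MemBesov.mono_smoothness {s s' : ℝ} (hss : s' ≤ s) (hf : MemBesov φ ψ s f) :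
    MemBesov φ ψ s' f := by
  rw [memBesov_iff] at hf ⊢
  refine lt_of_le_of_lt (iSup_mono fun J => ?_) hf
  gcongr
  exact one_le_two

lemma thresholdedEnergy_le_levelEnergy (j : ℕ) (lam : ℝ) :
    thresholdedEnergy φ ψ f j lam ≤ levelEnergy φ ψ f j :=
  ENNReal.tsum_le_tsum fun _ => ENNReal.tsum_le_tsum fun _ => by split_ifs <;> simp

end Energy

lemma wsc_eq_zero_of_notMem_Icc {L : ℝ} {h : ℝ → ℝ} (hh : ∀ x, x ∉ Icc (0 : ℝ) L → h x = 0)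
    {j : ℕ} {k : ℤ} (hk : k ∉ Finset.Icc (-⌈L⌉) (2 ^ j)) {x : ℝ} (hx : x ∈ Icc (0 : ℝ) 1) :
    wsc h j k x = 0 := by
  suffices (2 : ℝ) ^ j * x - k ∉ Icc 0 L by rw [wsc, hh _ this, mul_zero]
  have hpow : (0 : ℝ) < 2 ^ j := by positivity
  rw [Finset.mem_Icc, not_and_or, not_le, not_le] at hk
  rw [mem_Icc, not_and_or, not_le, not_le]
  rcases hk with hk | hk
  · have hk' : (k : ℝ) + 1 ≤ -⌈L⌉ := by exact_mod_cast hk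
    have := Int.le_ceil L
    right; nlinarith [hx.1]
  · have hk' : (2 : ℝ) ^ j + 1 ≤ k := by exact_mod_cast hk
    left; nlinarith [hx.2]

section CompactSupport

variable {L : ℝ} {d : ℕ} {φ ψ : ℝ → ℝ}
  (hφ : ∀ x, x ∉ Icc (0 : ℝ) L → φ x = 0) (hψ : ∀ x, x ∉ Icc (0 : ℝ) L → ψ x = 0)
include hφ hψ

lemma coefW_eq_zero_of_notMem_Icc (f : (Fin d → ℝ) → ℝ) {j : ℕ} {k : Fin d → ℤ}
    (ε : Fin d → Bool) {m : Fin d} (hk : k m ∉ Finset.Icc (-⌈L⌉) (2 ^ j)) :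
    coefW φ ψ f j k ε = 0 := by
  refine setIntegral_eq_zero_of_forall_eq_zero fun x hx => ?_
  have hxm : x m ∈ Icc (0 : ℝ) 1 := hx m (mem_univ m)
  rw [tensW, Finset.prod_eq_zero (Finset.mem_univ m), mul_zero]
  split_ifs
  exacts [wsc_eq_zero_of_notMem_Icc hψ hk hxm, wsc_eq_zero_of_notMem_Icc hφ hk hxm]

-- The threshold of `W_G` is a real `tsum`, which would silently be `0` without this.
lemma summable_sq_coefW (f : (Fin d → ℝ) → ℝ) (j : ℕ) (ε : Fin d → Bool) :
    Summable fun k : Fin d → ℤ => coefW φ ψ f j k ε ^ 2 := by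
  refine summable_of_ne_finset_zero
    (s := Fintype.piFinset fun _ => Finset.Icc (-⌈L⌉) (2 ^ j)) fun k hk => ?_
  obtain ⟨m, hm⟩ := not_forall.1 (mt Fintype.mem_piFinset.2 hk)
  rw [coefW_eq_zero_of_notMem_Icc hφ hψ f ε hm, zero_pow two_ne_zero]

lemma thresholdedEnergy_le_card_mul (f : (Fin d → ℝ) → ℝ) (j : ℕ) (lam : ℝ) :
    thresholdedEnergy φ ψ f j lam ≤
      Fintype.card (Sd d) * ENNReal.ofReal (2 ^ (d * j) * lam ^ 2) := by
  rw [thresholdedEnergy, ENNReal.tsum_comm]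
  refine (ENNReal.tsum_le_tsum fun ε : Sd d => ENNReal.tsum_ite_tsum_le_ofReal
    (a := fun k => coefW φ ψ f j k ε.1 ^ 2) (fun _ => sq_nonneg _)
    (summable_sq_coefW hφ hψ f j ε.1) _).trans_eq ?_
  rw [tsum_fintype, Finset.sum_const, Finset.card_univ, nsmul_eq_mul]

lemma tsum_thresholdedEnergy_le (hd : 1 ≤ d) (f : (Fin d → ℝ) → ℝ) (J : ℕ) (lam : ℝ) :
    ∑' j, thresholdedEnergy φ ψ f j lam ≤
      Fintype.card (Sd d) * ENNReal.ofReal (2 ^ (d * (J + 1)) * lam ^ 2) + tailEnergy φ ψ f J := by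
  rw [ENNReal.tsum_nat_eq_sum_range_add_tsum_gt _ J]
  gcongr ?_ + ?_
  · calc ∑ j ∈ Finset.range (J + 1), thresholdedEnergy φ ψ f j lam
        ≤ ∑ j ∈ Finset.range (J + 1),
            Fintype.card (Sd d) * ENNReal.ofReal (2 ^ (d * j) * lam ^ 2) :=
          Finset.sum_le_sum fun j _ => thresholdedEnergy_le_card_mul hφ hψ f j lam
      _ = Fintype.card (Sd d) *
            ENNReal.ofReal ((∑ j ∈ Finset.range (J + 1), (2 : ℝ) ^ (d * j)) * lam ^ 2) := by
          rw [← Finset.mul_sum, Finset.sum_mul,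
            ENNReal.ofReal_sum_of_nonneg fun j _ => by positivity]
      _ ≤ _ := by gcongr; exact sum_range_two_pow_mul_le hd _
  · exact ENNReal.tsum_le_tsum fun j => thresholdedEnergy_le_levelEnergy _ _

lemma memWeakG_of_memBesov (hd : 1 ≤ d) {f : (Fin d → ℝ) → ℝ} {s : ℝ} (hs : 0 < s)
    (hf : MemBesov φ ψ s f) :
    MemWeakG φ ψ (2 * d / (2 * s + d)) f := by
  rw [memBesov_iff] at hf
  rw [memWeakG_iff]
  refine lt_of_le_of_lt (iSup₂_le fun lam hlam => ?_)
    (ENNReal.add_lt_top.2 ⟨ENNReal.mul_lt_top (ENNReal.natCast_lt_top (Fintype.card (Sd d)))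
      (ENNReal.ofReal_lt_top (r := 4 ^ d)), hf⟩)
  obtain ⟨J, hJ₁, hJ₂⟩ := exists_level_balancing d hs hlam.1 hlam.2
  calc ENNReal.ofReal (lam ^ (2 * d / (2 * s + d) - 2)) * ∑' j, thresholdedEnergy φ ψ f j lam
      ≤ ENNReal.ofReal (lam ^ (2 * d / (2 * s + d) - 2)) *
          (Fintype.card (Sd d) * ENNReal.ofReal (2 ^ (d * (J + 1)) * lam ^ 2) +
            tailEnergy φ ψ f J) := by
        gcongr; exact tsum_thresholdedEnergy_le hφ hψ hd f J lam
    _ = Fintype.card (Sd d) *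
          ENNReal.ofReal (lam ^ (2 * d / (2 * s + d) - 2) * (2 ^ (d * (J + 1)) * lam ^ 2)) +
          ENNReal.ofReal (lam ^ (2 * d / (2 * s + d) - 2)) * tailEnergy φ ψ f J := by
        rw [ENNReal.ofReal_mul (Real.rpow_nonneg hlam.1.le _)]; ring
    _ ≤ Fintype.card (Sd d) * ENNReal.ofReal (4 ^ d) +
          ENNReal.ofReal (2 ^ (2 * (J : ℝ) * s)) * tailEnergy φ ψ f J := by
        gcongr
    _ ≤ _ := by
        gcongr
        exact le_iSup (fun J : ℕ => ENNReal.ofReal (2 ^ (2 * (J : ℝ) * s)) * tailEnergy φ ψ f J) J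

end CompactSupport

end CopulaEstimation

open CopulaEstimation in
theorem besov_subset_besov_inter_weakG_general
    (d : ℕ) (hd : 2 ≤ d) (L : ℝ) (φ ψ : ℝ → ℝ)
    (hwav : IsWaveletBasis d L φ ψ) (s : ℝ) (hs : 0 < s) :
    ∀ f : (Fin d → ℝ) → ℝ, MemLp f 2 (volume.restrict (box d)) →
      MemBesov φ ψ s f →
      MemBesov φ ψ (d * s / (2 * s + d)) f ∧ MemWeakG φ ψ (2 * d / (2 * s + d)) f := by
  intro f _ hf
  obtain ⟨-, -, hφ, hψ, -⟩ := hwav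
  refine ⟨hf.mono_smoothness ?_, memWeakG_of_memBesov hφ hψ (by omega) hs hf⟩
  rw [div_le_iff₀ (by positivity)]
  nlinarith

open CopulaEstimation in
/-- every function of `B^s_{2∞}` belongs to
`B^{ds/(2s+d)}_{2∞} ∩ W_G(2d/(2s+d))`. -/
theorem besov_subset_besov_inter_weakG
    (d : ℕ) (hd : 2 ≤ d) (L : ℝ) (hL : 1 ≤ L) (φ ψ : ℝ → ℝ)
    (hwav : IsWaveletBasis d L φ ψ) (s : ℝ) (hs : 0 < s) :
    ∀ f : (Fin d → ℝ) → ℝ, MemLp f 2 (volume.restrict (box d)) →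
      MemBesov φ ψ s f →
      MemBesov φ ψ (d * s / (2 * s + d)) f ∧ MemWeakG φ ψ (2 * d / (2 * s + d)) f :=
  besov_subset_besov_inter_weakG_general d hd L φ ψ hwav s hs
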